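/- Assume C is Krull–Schmidt (every object is a finite direct sum of objects whose endomorphism rings are local). If A, A₁, A₂ are objects of C such that the image of A in the quotient category C/X is isomorphic to the direct sum of the images of A₁ and A₂, then there exist objects X₁, X₂ in X such that A ⊕ X₁ ≅ A₁ ⊕ A₂ ⊕ X₂ in C. -/

import Mathlib

/-!
Common definitions: the ideal of morphisms factoring through a subcategory `X`
(given as a set of objects of `C`), `X`-monic and `X`-epic morphisms, left and
right `X`-approximations, additive subcategories closed under isomorphisms,
direct sums and direct summands, and the additive quotient category `C/X`
(realized via `CategoryTheory.Quotient` of the relation `xRel X`).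
-/

open CategoryTheory Category Limits Pretriangulated

universe v u

namespace PaperStmt

variable {C : Type u} [Category.{v} C]

/-- `f` factors through an object of `X`. -/
def FactorsThru (X : Set C) {A B : C} (f : A ⟶ B) : Prop :=
  ∃ (M : C) (g : A ⟶ M) (h : M ⟶ B), M ∈ X ∧ g ≫ h = f

/-- `f : A ⟶ B` is `X`-monic: the map `Hom(B, X') → Hom(A, X')`, `g ↦ g ∘ f`,
is surjective for every object `X'` of `X`. -/
def IsXMonic (X : Set C) {A B : C} (f : A ⟶ B) : Prop :=
  ∀ ⦃X' : C⦄, X' ∈ X → ∀ g : A ⟶ X', ∃ h : B ⟶ X', f ≫ h = g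

/-- `f : A ⟶ B` is `X`-epic: the map `Hom(X', A) → Hom(X', B)`, `g ↦ f ∘ g`,
is surjective for every object `X'` of `X`. -/
def IsXEpic (X : Set C) {A B : C} (f : A ⟶ B) : Prop :=
  ∀ ⦃X' : C⦄, X' ∈ X → ∀ g : X' ⟶ B, ∃ h : X' ⟶ A, h ≫ f = g

/-- `α : A ⟶ X₀` is a left `X`-approximation of `A`: `X₀` lies in `X` and every
morphism from `A` to an object of `X` factors through `α`. -/
def IsLeftApprox (X : Set C) {A X₀ : C} (α : A ⟶ X₀) : Prop :=
  X₀ ∈ X ∧ IsXMonic X α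

/-- `β : X₀ ⟶ B` is a right `X`-approximation of `B`: `X₀` lies in `X` and every
morphism from an object of `X` to `B` factors through `β`. -/
def IsRightApprox (X : Set C) {X₀ B : C} (β : X₀ ⟶ B) : Prop :=
  X₀ ∈ X ∧ IsXEpic X β

/-- `X` is (the object class of) a full additive subcategory of `C`, closed
under isomorphisms, finite direct sums and direct summands. -/
structure IsAdditiveClosedSubcat [Preadditive C] [HasBinaryBiproducts C] (X : Set C) :
    Prop where
  zero_mem : ∀ Z : C, IsZero Z → Z ∈ X
  iso_closed : ∀ {A B : C}, (A ≅ B) → A ∈ X → B ∈ X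
  sum_closed : ∀ {A B : C}, A ∈ X → B ∈ X → (A ⊞ B) ∈ X
  summand_closed : ∀ {A B : C}, (A ⊞ B) ∈ X → A ∈ X

/-- Two morphisms are identified in the quotient category `C/X` precisely when
their difference factors through an object of `X`. -/
def xRel [Preadditive C] (X : Set C) : HomRel C :=
  fun _ _ f g => FactorsThru X (f - g)

/-!
Lift the isomorphism in `C/X` to `f : A ⟶ A₁ ⊞ A₂` and `g` back, with `g ≫ f - 𝟙 = p ≫ q`
through some `N ∈ X`; then `(g, -p)` and `(f, q)` exhibit `A₁ ⊞ A₂` as a retract of `A ⊞ N`.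
A Krull–Schmidt category is idempotent complete (by induction on the number of local
summands: an idempotent of `A ⊞ B` with `End A` local either factors through `B` or splits
off a copy of `A`), so `A ⊞ N ≅ (A₁ ⊞ A₂) ⊞ B`. The complement `B` is killed by `(f, q)`,
which is invertible modulo `X`; hence `𝟙 B` factors through `X` and `B ∈ X`.
-/

open Preadditive ZeroObject

namespace FactorsThru

variable {X : Set C} {A B D : C}

lemma of_mem_source {M : C} (hM : M ∈ X) (f : M ⟶ B) : FactorsThru X f :=
  ⟨M, 𝟙 M, f, hM, id_comp f⟩

lemma of_mem_target {M : C} (hM : M ∈ X) (f : A ⟶ M) : FactorsThru X f :=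
  ⟨M, f, 𝟙 M, hM, comp_id f⟩

lemma comp_left (f : A ⟶ B) {g : B ⟶ D} (hg : FactorsThru X g) : FactorsThru X (f ≫ g) := by
  obtain ⟨M, α, β, hM, rfl⟩ := hg
  exact ⟨M, f ≫ α, β, hM, assoc f α β⟩

lemma comp_right {f : A ⟶ B} (hf : FactorsThru X f) (g : B ⟶ D) : FactorsThru X (f ≫ g) := by
  obtain ⟨M, α, β, hM, rfl⟩ := hf
  exact ⟨M, α, β ≫ g, hM, (assoc α β g).symm⟩

variable [Preadditive C]

lemma neg {f : A ⟶ B} (hf : FactorsThru X f) : FactorsThru X (-f) := by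
  obtain ⟨M, α, β, hM, rfl⟩ := hf
  exact ⟨M, -α, β, hM, neg_comp α β⟩

variable [HasBinaryBiproducts C]

lemma zero [HasZeroObject C] (hX : IsAdditiveClosedSubcat X) : FactorsThru X (0 : A ⟶ B) :=
  ⟨0, 0, 0, hX.zero_mem 0 (isZero_zero C), zero_comp⟩

lemma add (hX : IsAdditiveClosedSubcat X) {f g : A ⟶ B} (hf : FactorsThru X f)
    (hg : FactorsThru X g) : FactorsThru X (f + g) := by
  obtain ⟨M, α, β, hM, rfl⟩ := hf
  obtain ⟨N, γ, δ, hN, rfl⟩ := hg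
  exact ⟨M ⊞ N, biprod.lift α γ, biprod.desc β δ, hX.sum_closed hM hN, biprod.lift_desc⟩

lemma sub (hX : IsAdditiveClosedSubcat X) {f g : A ⟶ B} (hf : FactorsThru X f)
    (hg : FactorsThru X g) : FactorsThru X (f - g) := by
  simpa only [sub_eq_add_neg] using hf.add hX hg.neg

lemma of_comp (hX : IsAdditiveClosedSubcat X) {a : D ⟶ A} {f : A ⟶ B} {g : B ⟶ A}
    (hfg : FactorsThru X (f ≫ g - 𝟙 A)) (haf : FactorsThru X (a ≫ f)) : FactorsThru X a := by
  have ha : a = (a ≫ f) ≫ g - a ≫ (f ≫ g - 𝟙 A) := by simp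
  rw [ha]
  exact (haf.comp_right g).sub hX (hfg.comp_left a)

lemma of_comp_biprod_desc_eq_zero (hX : IsAdditiveClosedSubcat X) {N P : C} (hN : N ∈ X)
    {f : A ⟶ B} {g : B ⟶ A} (hfg : FactorsThru X (f ≫ g - 𝟙 A)) (q : N ⟶ B)
    {ι : P ⟶ A ⊞ N} (hι : ι ≫ biprod.desc f q = 0) : FactorsThru X ι := by
  have hfst : FactorsThru X (ι ≫ biprod.fst) := by
    refine of_comp hX hfg ?_
    have hιf : (ι ≫ biprod.fst) ≫ f = -((ι ≫ biprod.snd) ≫ q) := by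
      rw [eq_neg_iff_add_eq_zero, ← hι]
      simp [biprod.desc_eq]
    rw [hιf]
    exact ((of_mem_source hN q).comp_left _).neg
  rw [← comp_id ι, ← biprod.total, comp_add, ← assoc, ← assoc]
  exact (hfst.comp_right _).add hX ((of_mem_target hN _).comp_right _)

end FactorsThru

section Quotient

variable [Preadditive C] [HasBinaryBiproducts C] [HasZeroObject C] {X : Set C}

lemma congruence_xRel (hX : IsAdditiveClosedSubcat X) : Congruence (xRel X) where
  equivalence :=
    { refl := fun f => by simpa only [xRel, sub_self] using FactorsThru.zero hX
      symm := fun h => by simpa only [xRel, neg_sub] using h.neg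
      trans := fun h₁ h₂ => by simpa only [xRel, sub_add_sub_cancel] using h₁.add hX h₂ }
  comp_left f _ _ h := by simpa only [xRel, comp_sub] using h.comp_left f
  comp_right g h := by simpa only [xRel, sub_comp] using h.comp_right g

lemma exists_inverse_modulo_of_iso (hX : IsAdditiveClosedSubcat X) {A B : C}
    (I : (Quotient.functor (xRel X)).obj A ≅ (Quotient.functor (xRel X)).obj B) :
    ∃ (f : A ⟶ B) (g : B ⟶ A),
      FactorsThru X (f ≫ g - 𝟙 A) ∧ FactorsThru X (g ≫ f - 𝟙 B) := by
  have := congruence_xRel hX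
  obtain ⟨f, hf⟩ := (Quotient.functor (xRel X)).map_surjective I.hom
  obtain ⟨g, hg⟩ := (Quotient.functor (xRel X)).map_surjective I.inv
  refine ⟨f, g, (Quotient.functor_map_eq_iff (xRel X) (f ≫ g) (𝟙 A)).1 ?_,
    (Quotient.functor_map_eq_iff (xRel X) (g ≫ f) (𝟙 B)).1 ?_⟩ <;> simp [hf, hg]

end Quotient

section Idempotents

def IsSplit {Y : C} (p : Y ⟶ Y) : Prop :=
  ∃ (Z : C) (i : Z ⟶ Y) (e : Y ⟶ Z), i ≫ e = 𝟙 Z ∧ e ≫ i = p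

def IdempotentsSplit (Y : C) : Prop :=
  ∀ p : Y ⟶ Y, p ≫ p = p → IsSplit p

lemma IdempotentsSplit.of_iso {Y Y' : C} (φ : Y ≅ Y') (h : IdempotentsSplit Y') :
    IdempotentsSplit Y := fun p hp =>
  (Idempotents.split_iff_of_iso φ p (φ.inv ≫ p ≫ φ.hom) (by simp)).2
    (h _ (by simp [reassoc_of% hp]))

lemma IdempotentsSplit.isSplit_of_factors {Y B : C} (hB : IdempotentsSplit B)
    {e : Y ⟶ Y} (he : e ≫ e = e) (q : Y ⟶ B) (r : B ⟶ Y) (hqr : q ≫ r = e) : IsSplit e := by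
  have hqr' : ∀ {W : C} (x : Y ⟶ W), q ≫ r ≫ x = e ≫ x := fun x => by rw [← assoc, hqr]
  have he' : ∀ {W : C} (x : Y ⟶ W), e ≫ e ≫ x = e ≫ x := fun x => by rw [← assoc, he]
  obtain ⟨Z, i, p, hip, hpi⟩ := hB (r ≫ e ≫ q) (by simp only [assoc, hqr', he'])
  refine ⟨Z, i ≫ r ≫ e, e ≫ q ≫ p, ?_, ?_⟩
  · simp only [assoc, he', ← reassoc_of% hpi, reassoc_of% hip, hip]
  · simp only [assoc, reassoc_of% hpi, hqr', he]

variable [Preadditive C]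

lemma idem_sub_of_retract {A Y : C} {e : Y ⟶ Y} {s : A ⟶ Y} {t : Y ⟶ A} (he : e ≫ e = e)
    (hst : s ≫ t = 𝟙 A) (hse : s ≫ e = s) (het : e ≫ t = t) :
    (e - t ≫ s) ≫ (e - t ≫ s) = e - t ≫ s := by
  simp only [sub_comp, comp_sub, he, reassoc_of% het, assoc, hse, reassoc_of% hst]
  abel

variable [HasBinaryBiproducts C]

lemma IsSplit.add {Y : C} {p₁ p₂ : Y ⟶ Y} (h₁ : IsSplit p₁) (h₂ : IsSplit p₂)
    (h₁₂ : p₁ ≫ p₂ = 0) (h₂₁ : p₂ ≫ p₁ = 0) : IsSplit (p₁ + p₂) := by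
  obtain ⟨Z₁, i₁, e₁, hie₁, rfl⟩ := h₁
  obtain ⟨Z₂, i₂, e₂, hie₂, rfl⟩ := h₂
  have h₁₂' : i₁ ≫ e₂ = 0 := by
    simpa [reassoc_of% hie₁, hie₂] using i₁ ≫= (h₁₂ =≫ e₂)
  have h₂₁' : i₂ ≫ e₁ = 0 := by
    simpa [reassoc_of% hie₂, hie₁] using i₂ ≫= (h₂₁ =≫ e₁)
  exact ⟨Z₁ ⊞ Z₂, biprod.desc i₁ i₂, biprod.lift e₁ e₂, by ext <;> simp [*], by simp⟩

lemma isSplit_of_retract {A Y : C} {e : Y ⟶ Y} {s : A ⟶ Y} {t : Y ⟶ A} (hst : s ≫ t = 𝟙 A)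
    (hse : s ≫ e = s) (het : e ≫ t = t) (h : IsSplit (e - t ≫ s)) : IsSplit e := by
  have hsplit := IsSplit.add ⟨A, s, t, hst, rfl⟩ h
    (by simp only [comp_sub, assoc, hse, reassoc_of% hst, sub_self])
    (by simp only [sub_comp, assoc, reassoc_of% het, reassoc_of% hst, sub_self])
  rwa [add_sub_cancel] at hsplit

/-- The automorphism `biprod.desc (biprod.inl ≫ (𝟙 - e)) biprod.inr` of `A ⊞ B`, whose
inverse gives the first factor, turns `e` into a map vanishing on `A`. -/
lemma biprod_comp_inr_eq_of_corner {A B : C} {e : A ⊞ B ⟶ A ⊞ B} (he : e ≫ e = e)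
    {w : A ⟶ A} (hw : w ≫ biprod.inl ≫ (𝟙 _ - e) ≫ biprod.fst = 𝟙 A) :
    (biprod.snd - biprod.fst ≫ w ≫ biprod.inl ≫ (𝟙 _ - e) ≫ biprod.snd) ≫ biprod.inr ≫ e
      = e := by
  have hsnd : biprod.snd ≫ biprod.inr = 𝟙 (A ⊞ B) - biprod.fst ≫ biprod.inl :=
    eq_sub_of_add_eq' biprod.total
  set k := 𝟙 (A ⊞ B) - e
  have hker : k ≫ e = 0 := by simp [k, he]
  calc _ = (biprod.snd ≫ biprod.inr) ≫ e
        - biprod.fst ≫ w ≫ biprod.inl ≫ k ≫ (biprod.snd ≫ biprod.inr) ≫ e := by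
          simp only [sub_comp, assoc]
    _ = e - biprod.fst ≫ biprod.inl ≫ e
        + biprod.fst ≫ (w ≫ biprod.inl ≫ k ≫ biprod.fst) ≫ biprod.inl ≫ e := by
          rw [hsnd]
          simp only [sub_comp, comp_sub, id_comp, hker, comp_zero, assoc]
          abel
    _ = e := by rw [hw]; simp

end Idempotents

section KrullSchmidt

variable [Preadditive C] [HasBinaryBiproducts C]

lemma IdempotentsSplit.biprod_of_isLocalRing {A B : C} [IsLocalRing (End A)]
    (hB : IdempotentsSplit B) : IdempotentsSplit (A ⊞ B) := by
  have of_corner : ∀ e : A ⊞ B ⟶ A ⊞ B, e ≫ e = e → ∀ w : A ⟶ A,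
      w ≫ biprod.inl ≫ (𝟙 _ - e) ≫ biprod.fst = 𝟙 A → IsSplit e :=
    fun e he w hw => hB.isSplit_of_factors he _ _ (biprod_comp_inr_eq_of_corner he hw)
  intro e he
  -- If the corner `a = inl ≫ e ≫ fst` is a unit, `inl ≫ e` embeds `A` into the image of `e`
  -- and the remaining idempotent has corner `0`; otherwise `𝟙 - a` is a unit and `e`
  -- factors through `B`.
  obtain ha | hu := IsLocalRing.isUnit_or_isUnit_of_add_one
    (add_sub_cancel (End.of (biprod.inl ≫ e ≫ biprod.fst)) 1)
  · obtain ⟨b, hb⟩ := ha.exists_left_inv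
    have hab : (biprod.inl ≫ e ≫ biprod.fst) ≫ b = 𝟙 A := hb
    have hst : (biprod.inl ≫ e) ≫ e ≫ biprod.fst ≫ b = 𝟙 A := by
      simpa [reassoc_of% he] using hab
    have hse : (biprod.inl ≫ e) ≫ e = biprod.inl ≫ e := by simp [he]
    have het : e ≫ e ≫ biprod.fst ≫ b = e ≫ biprod.fst ≫ b := by simp [reassoc_of% he]
    refine isSplit_of_retract hst hse het
      (of_corner _ (idem_sub_of_retract he hst hse het) (𝟙 A) ?_)
    simp [sub_comp, comp_sub, reassoc_of% hab]
  · obtain ⟨w, hw⟩ := hu.exists_right_inv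
    refine of_corner e he w ?_
    calc _ = w ≫ (𝟙 A - biprod.inl ≫ e ≫ biprod.fst) := by simp [comp_sub, sub_comp]
      _ = 𝟙 A := hw

variable [HasFiniteBiproducts C]

noncomputable def biproductFinSuccIso {n : ℕ} (f : Fin (n + 1) → C) :
    (⨁ f) ≅ f 0 ⊞ (⨁ fun j : Fin n => f j.succ) where
  hom := biprod.lift (biproduct.π f 0) (biproduct.lift fun j => biproduct.π f j.succ)
  inv := biprod.desc (biproduct.ι f 0) (biproduct.desc fun j => biproduct.ι f j.succ)
  hom_inv_id := by
    rw [biprod.lift_desc, biproduct.lift_desc, ← biproduct.total, Fin.sum_univ_succ]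
  inv_hom_id := by
    apply biprod.hom_ext'
    · apply biprod.hom_ext
      · simp
      · ext j
        simp [(Fin.succ_ne_zero j).symm]
    · ext j : 1
      apply biprod.hom_ext
      · simp [Fin.succ_ne_zero j]
      · ext k
        simp [biproduct.ι_π, Fin.succ_inj]

lemma idempotentsSplit_biproduct {n : ℕ} (f : Fin n → C) (hf : ∀ i, IsLocalRing (End (f i))) :
    IdempotentsSplit (⨁ f) := by
  induction n with
  | zero => exact fun p _ => ⟨⨁ f, 𝟙 _, 𝟙 _, id_comp _, biproduct.hom_ext _ _ (·.elim0)⟩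
  | succ n ih =>
    have := hf 0
    exact ((ih _ fun i => hf i.succ).biprod_of_isLocalRing).of_iso (biproductFinSuccIso f)

lemma isIdempotentComplete_of_krullSchmidt
    (hKS : ∀ A : C, ∃ (n : ℕ) (f : Fin n → C),
      (∀ i, IsLocalRing (End (f i))) ∧ Nonempty (A ≅ ⨁ f)) :
    IsIdempotentComplete C where
  idempotents_split Y p hp := by
    obtain ⟨n, f, hf, ⟨φ⟩⟩ := hKS Y
    exact (idempotentsSplit_biproduct f hf).of_iso φ p hp

end KrullSchmidt

section Complement

variable [Preadditive C] [HasBinaryBiproducts C] [IsIdempotentComplete C]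

lemma exists_iso_biprod_of_retract {B Y : C} (ρ : Retract B Y) :
    ∃ (B' : C) (φ : Y ≅ B ⊞ B'), φ.hom ≫ biprod.fst = ρ.r := by
  obtain ⟨B', i, p, hip, hpi⟩ := IsIdempotentComplete.idempotents_split Y (𝟙 Y - ρ.r ≫ ρ.i)
    (Idempotents.idem_of_id_sub_idem _ (by simp [reassoc_of% ρ.retract]))
  have hρp : ρ.i ≫ p = 0 := by
    calc ρ.i ≫ p = ρ.i ≫ (p ≫ i) ≫ p := by simp [hip]
      _ = 0 := by simp [hpi, reassoc_of% ρ.retract]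
  have hiρ : i ≫ ρ.r = 0 := by
    calc i ≫ ρ.r = i ≫ (p ≫ i) ≫ ρ.r := by simp [reassoc_of% hip]
      _ = 0 := by simp [hpi, ρ.retract]
  refine ⟨B', ⟨biprod.lift ρ.r p, biprod.desc ρ.i i, ?_, ?_⟩, biprod.lift_fst _ _⟩
  · simp [hpi]
  · ext <;> simp [ρ.retract, hρp, hiρ, hip]

lemma mem_of_factorsThru_id {X : Set C} (hX : IsAdditiveClosedSubcat X) {B : C}
    (h : FactorsThru X (𝟙 B)) : B ∈ X := by
  obtain ⟨M, α, β, hM, hαβ⟩ := h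
  obtain ⟨B', φ, -⟩ := exists_iso_biprod_of_retract ⟨α, β, hαβ⟩
  exact hX.summand_closed (hX.iso_closed φ hM)

end Complement

/-- in a Krull–Schmidt additive category `C`, if the image of `A`
in the quotient category `C/X` is isomorphic to the direct sum of the images of
`A₁` and `A₂`, then `A ⊕ X₁ ≅ A₁ ⊕ A₂ ⊕ X₂` in `C` for some `X₁, X₂ ∈ X`. -/
theorem statement16 [Preadditive C] [HasBinaryBiproducts C] [HasFiniteBiproducts C]
    (X : Set C) (hX : IsAdditiveClosedSubcat X)
    -- `C` is Krull–Schmidt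
    (hKS : ∀ A : C, ∃ (n : ℕ) (f : Fin n → C),
      (∀ i, IsLocalRing (End (f i))) ∧ Nonempty (A ≅ ⨁ f))
    (A A₁ A₂ : C)
    (h : Nonempty ((Quotient.functor (xRel X)).obj A ≅
      (Quotient.functor (xRel X)).obj (A₁ ⊞ A₂))) :
    ∃ X₁ ∈ X, ∃ X₂ ∈ X, Nonempty ((A ⊞ X₁) ≅ (A₁ ⊞ A₂ ⊞ X₂)) := by
  have := isIdempotentComplete_of_krullSchmidt hKS
  obtain ⟨I⟩ := h
  obtain ⟨f, g, hfg, N, p, q, hN, hpq⟩ := exists_inverse_modulo_of_iso hX I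
  let ρ : Retract (A₁ ⊞ A₂) (A ⊞ N) := ⟨biprod.lift g (-p), biprod.desc f q, by simp [hpq]⟩
  obtain ⟨B, φ, hφ⟩ := exists_iso_biprod_of_retract ρ
  have hι : (biprod.inr ≫ φ.inv) ≫ ρ.r = 0 := by simp [← hφ]
  have hB : FactorsThru X (𝟙 B) := by
    simpa using (FactorsThru.of_comp_biprod_desc_eq_zero hX hN hfg q hι).comp_right
      (φ.hom ≫ biprod.snd)
  exact ⟨N, hN, B, mem_of_factorsThru_id hX hB, ⟨φ ≪≫ biprod.associator _ _ _⟩⟩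

end PaperStmt
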